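/- In the MDP of the previous context with starting state s₀, there exist two max-following policies (differing only in tie-breaking at states where multiple constituents attain the maximum value) whose expected cumulative rewards differ: one obtains 0 and another obtains H − 2, for any horizon H ≥ 3. -/
import Mathlib


/-- Value function of a policy in a deterministic finite-horizon MDP with transition
function `next` and reward `R`. -/
def dval {S A : Type} (next : S → A → S) (R : S → A → ℝ)
    (H : ℕ) (π : ℕ → S → A) : ℕ → S → ℝ
  | h, s =>
    if h < H then R s (π h s) + dval next R H π (h + 1) (next s (π h s))
    else 0
termination_by h _ => H - h
decreasing_by omega

/-- The five-state MDP of Figure 1b. States `0,…,4`; actions `0` = right, `1` = left,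
`2` = up. All unspecified transitions are self-loops. -/
def figNext : Fin 5 → Fin 3 → Fin 5
  | 0, 0 => 1
  | 0, _ => 0
  | 1, 1 => 0
  | 1, 2 => 4
  | 1, _ => 1
  | 2, 0 => 3
  | 2, 1 => 1
  | 2, _ => 2
  | 3, _ => 3
  | 4, _ => 4

/-- Rewards: `ε` on the transition `s₂ →(right) s₃`, reward `1` on the absorbing state
`s₄`, and `0` elsewhere. -/
noncomputable def figR (ε : ℝ) : Fin 5 → Fin 3 → ℝ
  | 2, 0 => ε
  | 4, _ => 1
  | _, _ => 0

/-- The constituent policies: `π⁰ ≡ right`, `π¹ ≡ left`, `π² ≡ up`. -/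
def figC : Fin 3 → ℕ → Fin 5 → Fin 3 := fun k _ _ => k

/-- If a set of states is closed under a policy and gives zero reward, the value is 0. -/
lemma dval_zero_of (ε : ℝ) (H : ℕ) (π : ℕ → Fin 5 → Fin 3) (T : Finset (Fin 5))
    (hc : ∀ h s, s ∈ T → figNext s (π h s) ∈ T)
    (hr : ∀ h s, s ∈ T → figR ε s (π h s) = 0) :
    ∀ h s, s ∈ T → dval figNext (figR ε) H π h s = 0 := by
  intro h s hs
  rw [dval]
  by_cases hlt : h < H
  · rw [if_pos hlt, hr h s hs,
      dval_zero_of ε H π T hc hr (h+1) _ (hc h s hs)]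
    ring
  · rw [if_neg hlt]
termination_by h s _ => H - h
decreasing_by omega

/-- Value at the absorbing state `4` is the number of remaining steps. -/
lemma dval_four (ε : ℝ) (H : ℕ) (π : ℕ → Fin 5 → Fin 3) :
    ∀ h, dval figNext (figR ε) H π h 4 = ((H - h : ℕ) : ℝ) := by
  intro h
  rw [dval]
  by_cases hlt : h < H
  · rw [if_pos hlt]
    have hrec := dval_four ε H π (h+1)
    have hr4 : figR ε 4 (π h 4) = 1 := by
      have : ∀ a : Fin 3, figR ε 4 a = 1 := by intro a; fin_cases a <;> rfl
      exact this _
    have hn4 : figNext 4 (π h 4) = 4 := by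
      have : ∀ a : Fin 3, figNext 4 a = 4 := by decide
      exact this _
    rw [hr4, hn4, hrec]
    have : (H - h) = (H - (h+1)) + 1 := by omega
    rw [this]; push_cast; ring
  · rw [if_neg hlt]
    have : H - h = 0 := by omega
    simp [this]
termination_by h => H - h
decreasing_by omega

/-- in the MDP of Figure 1b with starting state `s₀`, for any horizon
`H ≥ 3`, there exist two max-following policies (differing only in tie-breaking) whose
cumulative rewards from `s₀` are `0` and `H − 2` respectively. -/
theorem tie_breaking_matters (ε : ℝ) (hε0 : 0 < ε) (hε1 : ε < 1)
    (H : ℕ) (hH : 3 ≤ H) :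
    ∃ π π' : ℕ → Fin 5 → Fin 3,
      (∀ h, h < H → ∀ s, ∃ k : Fin 3, π h s = figC k h s ∧
        ∀ k' : Fin 3, dval figNext (figR ε) H (figC k') h s ≤
          dval figNext (figR ε) H (figC k) h s) ∧
      (∀ h, h < H → ∀ s, ∃ k : Fin 3, π' h s = figC k h s ∧
        ∀ k' : Fin 3, dval figNext (figR ε) H (figC k') h s ≤
          dval figNext (figR ε) H (figC k) h s) ∧
      dval figNext (figR ε) H π 0 0 = 0 ∧
      dval figNext (figR ε) H π' 0 0 = (H : ℝ) - 2 := by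
  -- zero-value facts for the constituent policies
  have hcA : ∀ a : Fin 3, ∀ s ∈ ({0, 1} : Finset (Fin 5)), figNext s a ∈ ({0, 1} : Finset (Fin 5)) → True := fun _ _ _ _ => trivial
  have Z00 : ∀ h, dval figNext (figR ε) H (figC 0) h 0 = 0 := fun h =>
    dval_zero_of ε H (figC 0) {0, 1}
      (fun h s hs => (by decide : ∀ s ∈ ({0,1} : Finset (Fin 5)), figNext s 0 ∈ ({0,1} : Finset (Fin 5))) s hs)
      (by intro h s hs; fin_cases hs <;> rfl) h 0 (by decide)
  have Z01 : ∀ h, dval figNext (figR ε) H (figC 0) h 1 = 0 := fun h =>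
    dval_zero_of ε H (figC 0) {0, 1}
      (fun h s hs => (by decide : ∀ s ∈ ({0,1} : Finset (Fin 5)), figNext s 0 ∈ ({0,1} : Finset (Fin 5))) s hs)
      (by intro h s hs; fin_cases hs <;> rfl) h 1 (by decide)
  have Z03 : ∀ h, dval figNext (figR ε) H (figC 0) h 3 = 0 := fun h =>
    dval_zero_of ε H (figC 0) {3}
      (fun h s hs => (by decide : ∀ s ∈ ({3} : Finset (Fin 5)), figNext s 0 ∈ ({3} : Finset (Fin 5))) s hs)
      (by intro h s hs; fin_cases hs <;> rfl) h 3 (by decide)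
  have Z1 : ∀ h, ∀ s ∈ ({0, 1, 2} : Finset (Fin 5)),
      dval figNext (figR ε) H (figC 1) h s = 0 :=
    fun h s hs => dval_zero_of ε H (figC 1) {0, 1, 2}
      (fun h s hs => (by decide : ∀ s ∈ ({0,1,2} : Finset (Fin 5)), figNext s 1 ∈ ({0,1,2} : Finset (Fin 5))) s hs)
      (by intro h s hs; fin_cases hs <;> rfl) h s hs
  have Z13 : ∀ h, dval figNext (figR ε) H (figC 1) h 3 = 0 := fun h =>
    dval_zero_of ε H (figC 1) {3}
      (fun h s hs => (by decide : ∀ s ∈ ({3} : Finset (Fin 5)), figNext s 1 ∈ ({3} : Finset (Fin 5))) s hs)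
      (by intro h s hs; fin_cases hs <;> rfl) h 3 (by decide)
  have Z20 : ∀ h, dval figNext (figR ε) H (figC 2) h 0 = 0 := fun h =>
    dval_zero_of ε H (figC 2) {0}
      (fun h s hs => (by decide : ∀ s ∈ ({0} : Finset (Fin 5)), figNext s 2 ∈ ({0} : Finset (Fin 5))) s hs)
      (by intro h s hs; fin_cases hs <;> rfl) h 0 (by decide)
  have Z22 : ∀ h, dval figNext (figR ε) H (figC 2) h 2 = 0 := fun h =>
    dval_zero_of ε H (figC 2) {2}
      (fun h s hs => (by decide : ∀ s ∈ ({2} : Finset (Fin 5)), figNext s 2 ∈ ({2} : Finset (Fin 5))) s hs)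
      (by intro h s hs; fin_cases hs <;> rfl) h 2 (by decide)
  have Z23 : ∀ h, dval figNext (figR ε) H (figC 2) h 3 = 0 := fun h =>
    dval_zero_of ε H (figC 2) {3}
      (fun h s hs => (by decide : ∀ s ∈ ({3} : Finset (Fin 5)), figNext s 2 ∈ ({3} : Finset (Fin 5))) s hs)
      (by intro h s hs; fin_cases hs <;> rfl) h 3 (by decide)
  -- up from state 1
  have V21 : ∀ h, h < H → dval figNext (figR ε) H (figC 2) h 1 = ((H - (h+1) : ℕ) : ℝ) := by
    intro h hlt
    rw [dval, if_pos hlt]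
    have : figNext 1 (figC 2 h 1) = 4 := rfl
    rw [this, dval_four, show figR ε 1 (figC 2 h 1) = 0 from rfl]
    ring
  have V21nn : ∀ h, h < H → (0:ℝ) ≤ dval figNext (figR ε) H (figC 2) h 1 := by
    intro h hlt; rw [V21 h hlt]; exact Nat.cast_nonneg _
  -- right from state 2
  have V02 : ∀ h, h < H → dval figNext (figR ε) H (figC 0) h 2 = ε := by
    intro h hlt
    rw [dval, if_pos hlt]
    have : figNext 2 (figC 0 h 2) = 3 := rfl
    rw [this, Z03, show figR ε 2 (figC 0 h 2) = ε from rfl]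
    ring
  have V02nn : ∀ h, h < H → (0:ℝ) ≤ dval figNext (figR ε) H (figC 0) h 2 := by
    intro h hlt; rw [V02 h hlt]; exact hε0.le
  refine ⟨fun _ s => if s = 0 then 1 else if s = 1 then 2 else 0,
          fun _ s => if s = 1 then 2 else 0, ?_, ?_, ?_, ?_⟩
  · intro h hlt s
    fin_cases s
    · exact ⟨1, rfl, fun k' => by
        fin_cases k'
        · exact le_of_eq ((Z00 h).trans (Z1 h 0 (by decide)).symm)
        · exact le_refl _
        · exact le_of_eq ((Z20 h).trans (Z1 h 0 (by decide)).symm)⟩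
    · exact ⟨2, rfl, fun k' => by
        fin_cases k'
        · exact (Z01 h).trans_le (V21nn h hlt)
        · exact (Z1 h 1 (by decide)).trans_le (V21nn h hlt)
        · exact le_refl _⟩
    · exact ⟨0, rfl, fun k' => by
        fin_cases k'
        · exact le_refl _
        · exact (Z1 h 2 (by decide)).trans_le (V02nn h hlt)
        · exact (Z22 h).trans_le (V02nn h hlt)⟩
    · exact ⟨0, rfl, fun k' => by
        fin_cases k'
        · exact le_refl _
        · exact le_of_eq ((Z13 h).trans (Z03 h).symm)
        · exact le_of_eq ((Z23 h).trans (Z03 h).symm)⟩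
    · exact ⟨0, rfl, fun k' => by
        fin_cases k' <;>
          exact le_of_eq ((dval_four ε H _ h).trans (dval_four ε H _ h).symm)⟩
  · intro h hlt s
    fin_cases s
    · exact ⟨0, rfl, fun k' => by
        fin_cases k'
        · exact le_refl _
        · exact le_of_eq ((Z1 h 0 (by decide)).trans (Z00 h).symm)
        · exact le_of_eq ((Z20 h).trans (Z00 h).symm)⟩
    · exact ⟨2, rfl, fun k' => by
        fin_cases k'
        · exact (Z01 h).trans_le (V21nn h hlt)
        · exact (Z1 h 1 (by decide)).trans_le (V21nn h hlt)
        · exact le_refl _⟩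
    · exact ⟨0, rfl, fun k' => by
        fin_cases k'
        · exact le_refl _
        · exact (Z1 h 2 (by decide)).trans_le (V02nn h hlt)
        · exact (Z22 h).trans_le (V02nn h hlt)⟩
    · exact ⟨0, rfl, fun k' => by
        fin_cases k'
        · exact le_refl _
        · exact le_of_eq ((Z13 h).trans (Z03 h).symm)
        · exact le_of_eq ((Z23 h).trans (Z03 h).symm)⟩
    · exact ⟨0, rfl, fun k' => by
        fin_cases k' <;>
          exact le_of_eq ((dval_four ε H _ h).trans (dval_four ε H _ h).symm)⟩
  · exact dval_zero_of ε H _ {0}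
      (by intro h s hs; fin_cases hs <;> exact (by decide : (0:Fin 5) ∈ ({0} : Finset (Fin 5))))
      (by intro h s hs; fin_cases hs <;> rfl) 0 0 (by decide)
  · have h0 : (0 : ℕ) < H := by omega
    have h1 : (1 : ℕ) < H := by omega
    rw [dval, if_pos h0]
    rw [show figNext 0 (if (0:Fin 5) = 1 then 2 else 0) = 1 from rfl,
        show figR ε 0 (if (0:Fin 5) = 1 then 2 else 0) = 0 from rfl]
    rw [dval, if_pos h1]
    rw [show figNext 1 (if (1:Fin 5) = 1 then 2 else 0) = 4 from rfl,
        show figR ε 1 (if (1:Fin 5) = 1 then 2 else 0) = 0 from rfl]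
    rw [dval_four]
    have : ((H - (1+1) : ℕ) : ℝ) = (H : ℝ) - 2 := by
      have h2 : (2:ℕ) ≤ H := by omega
      rw [show (1+1) = 2 from rfl, Nat.cast_sub h2]; norm_num
    rw [this]; ring
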